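/- Let m ≥ 1 and let α_0,…,α_m be strictly positive reals with Σ_{i=0}^m α_i = 1. Then every node power satisfies P_j ≥ 1 (for 1 ≤ j ≤ m), and consecutive node powers are distinct: P_j ≠ P_{j+1} for every 1 ≤ j ≤ m−1. (The latter is the invariant relied upon by powersort: the power of the new node never equals the power on top of the stack.) -/

import Mathlib

/-!
The node power of `a < b` is the first level `ℓ` at which the dyadic grid of mesh `2⁻ℓ` separates
`a` from `b`. Boundaries in `[0, 1)` are never separated at level `0`, so every power is positive.
For `a < b < c`, if both `(a, b)` and `(b, c)` were first separated at the same level `k + 1`, then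
`a`, `b`, `c` would lie in one dyadic cell of level `k`, which splits into only two cells of
level `k + 1`; so `a`, `b`, `c` cannot lie in three different ones. The boundaries of consecutive
nodes share their middle point, `Σ_{i<j} αᵢ + α_j/2 = Σ_{i≤j} αᵢ - α_j/2`.
-/

/-- The power of a split with boundaries `a < b`: the index of the first bit
in which the binary fractional expansions of `a` and `b` differ. -/
noncomputable def nodePower (a b : ℝ) : ℕ :=
  sInf {ℓ : ℕ | ⌊a * 2 ^ ℓ⌋ < ⌊b * 2 ^ ℓ⌋}

lemma exists_floor_mul_two_pow_lt {a b : ℝ} (hab : a < b) :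
    ∃ ℓ : ℕ, ⌊a * 2 ^ ℓ⌋ < ⌊b * 2 ^ ℓ⌋ := by
  obtain ⟨ℓ, hℓ⟩ := pow_unbounded_of_one_lt (b - a)⁻¹ one_lt_two
  refine ⟨ℓ, Int.lt_iff_add_one_le.mpr (Int.le_floor.mpr ?_)⟩
  have : 1 < (b - a) * 2 ^ ℓ := by rwa [inv_lt_iff_one_lt_mul₀' (sub_pos.mpr hab)] at hℓ
  push_cast
  linarith [Int.floor_le (a * 2 ^ ℓ)]

lemma floor_mul_two_pow_nodePower_lt {a b : ℝ} (hab : a < b) :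
    ⌊a * 2 ^ nodePower a b⌋ < ⌊b * 2 ^ nodePower a b⌋ :=
  Nat.sInf_mem (exists_floor_mul_two_pow_lt hab)

lemma floor_mul_two_pow_eq_of_lt_nodePower {a b : ℝ} (hab : a ≤ b) {ℓ : ℕ}
    (hℓ : ℓ < nodePower a b) : ⌊a * 2 ^ ℓ⌋ = ⌊b * 2 ^ ℓ⌋ :=
  le_antisymm (Int.floor_mono (by gcongr)) (not_lt.mp (Nat.notMem_of_lt_sInf hℓ))

lemma one_le_nodePower {a b : ℝ} (ha : 0 ≤ a) (hab : a < b) (hb : b < 1) :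
    1 ≤ nodePower a b := by
  by_contra! h
  have := floor_mul_two_pow_nodePower_lt hab
  rw [Nat.lt_one_iff.mp h, pow_zero, mul_one, mul_one, Int.floor_eq_zero_iff.mpr ⟨ha, hab.trans hb⟩,
    Int.floor_eq_zero_iff.mpr ⟨ha.trans hab.le, hb⟩] at this
  exact this.false

lemma floor_mul_two_pow_succ_div_two (x : ℝ) (k : ℕ) :
    ⌊x * 2 ^ (k + 1)⌋ / 2 = ⌊x * 2 ^ k⌋ := by
  rw [show x * 2 ^ k = x * 2 ^ (k + 1) / (2 : ℕ) by push_cast; ring, Int.floor_div_natCast]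
  rfl

lemma nodePower_ne_nodePower {a b c : ℝ} (hab : a < b) (hbc : b < c)
    (h : 1 ≤ nodePower a b) : nodePower a b ≠ nodePower b c := by
  intro heq
  obtain ⟨k, hk⟩ := Nat.exists_eq_add_of_le' h
  have hk' : nodePower b c = k + 1 := heq ▸ hk
  have hAB := floor_mul_two_pow_nodePower_lt hab
  have hBC := floor_mul_two_pow_nodePower_lt hbc
  have hab_k := floor_mul_two_pow_eq_of_lt_nodePower hab.le (ℓ := k) (by omega)
  have hbc_k := floor_mul_two_pow_eq_of_lt_nodePower hbc.le (ℓ := k) (by omega)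
  rw [hk] at hAB
  rw [hk'] at hBC
  have ha := floor_mul_two_pow_succ_div_two a k
  have hb := floor_mul_two_pow_succ_div_two b k
  have hc := floor_mul_two_pow_succ_div_two c k
  omega

section PartialSums

open Finset

lemma sum_range_sub_half_nonneg {α : ℕ → ℝ} {j : ℕ} (hj : 1 ≤ j) (hα : ∀ i < j, 0 ≤ α i) :
    0 ≤ ∑ i ∈ range j, α i - α (j - 1) / 2 := by
  obtain ⟨p, rfl⟩ := Nat.exists_eq_add_of_le' hj
  have : 0 ≤ ∑ i ∈ range p, α i := sum_nonneg fun i hi => hα i (by rw [mem_range] at hi; omega)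
  rw [sum_range_succ, Nat.add_sub_cancel]
  linarith [hα p (by omega)]

lemma sum_range_add_half_lt {α : ℕ → ℝ} {j n : ℕ} (hjn : j < n) (hα : ∀ i < n, 0 ≤ α i)
    (hαj : 0 < α j) : ∑ i ∈ range j, α i + α j / 2 < ∑ i ∈ range n, α i :=
  calc ∑ i ∈ range j, α i + α j / 2 < ∑ i ∈ range (j + 1), α i := by
        rw [sum_range_succ]; linarith
    _ ≤ ∑ i ∈ range n, α i := sum_le_sum_of_subset_of_nonneg (range_subset_range.mpr hjn)
        fun i hi _ => hα i (mem_range.mp hi)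

lemma sum_range_add_half_eq_sum_range_succ_sub_half (α : ℕ → ℝ) (j : ℕ) :
    ∑ i ∈ range j, α i + α j / 2 = ∑ i ∈ range (j + 1), α i - α j / 2 := by
  rw [sum_range_succ]; ring

end PartialSums

theorem nodePower_pos_and_consecutive_ne_general
    (m : ℕ) (α : ℕ → ℝ)
    (hpos : ∀ i ≤ m, 0 < α i)
    (hsum : (∑ i ∈ Finset.range (m + 1), α i) = 1) :
    (∀ j, 1 ≤ j → j ≤ m →
      1 ≤ nodePower ((∑ i ∈ Finset.range j, α i) - α (j - 1) / 2)
                    ((∑ i ∈ Finset.range j, α i) + α j / 2)) ∧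
    (∀ j, 1 ≤ j → j ≤ m - 1 →
      nodePower ((∑ i ∈ Finset.range j, α i) - α (j - 1) / 2)
                ((∑ i ∈ Finset.range j, α i) + α j / 2)
        ≠ nodePower ((∑ i ∈ Finset.range (j + 1), α i) - α j / 2)
                    ((∑ i ∈ Finset.range (j + 1), α i) + α (j + 1) / 2)) := by
  have bounds : ∀ j, 1 ≤ j → j ≤ m →
      0 ≤ (∑ i ∈ Finset.range j, α i) - α (j - 1) / 2 ∧
      (∑ i ∈ Finset.range j, α i) - α (j - 1) / 2 < (∑ i ∈ Finset.range j, α i) + α j / 2 ∧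
      (∑ i ∈ Finset.range j, α i) + α j / 2 < 1 := by
    intro j hj hjm
    refine ⟨sum_range_sub_half_nonneg hj fun i hi => (hpos i (by omega)).le,
      by linarith [hpos (j - 1) (by omega), hpos j hjm], ?_⟩
    rw [← hsum]
    exact sum_range_add_half_lt (by omega) (fun i hi => (hpos i (by omega)).le) (hpos j hjm)
  refine ⟨fun j hj hjm => ?_, fun j hj hjm => ?_⟩
  · obtain ⟨ha, hab, hb⟩ := bounds j hj hjm
    exact one_le_nodePower ha hab hb
  · obtain ⟨ha, hab, hb⟩ := bounds j hj (by omega)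
    obtain ⟨-, hbc, -⟩ := bounds (j + 1) (by omega) (by omega)
    rw [Nat.add_sub_cancel, ← sum_range_add_half_eq_sum_range_succ_sub_half] at hbc
    rw [← sum_range_add_half_eq_sum_range_succ_sub_half]
    exact nodePower_ne_nodePower hab hbc (one_le_nodePower ha hab hb)

/-- For strictly positive leaf probabilities `α₀,…,α_m` summing to 1, every
node power `P_j = nodePower ((Σ_{i<j} αᵢ) - α_{j-1}/2) ((Σ_{i<j} αᵢ) + α_j/2)`
satisfies `P_j ≥ 1`, and consecutive node powers are distinct:
`P_j ≠ P_{j+1}` for `1 ≤ j ≤ m-1` (the invariant relied upon by powersort). -/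
theorem nodePower_pos_and_consecutive_ne
    (m : ℕ) (hm : 1 ≤ m) (α : ℕ → ℝ)
    (hpos : ∀ i ≤ m, 0 < α i)
    (hsum : (∑ i ∈ Finset.range (m + 1), α i) = 1) :
    (∀ j, 1 ≤ j → j ≤ m →
      1 ≤ nodePower ((∑ i ∈ Finset.range j, α i) - α (j - 1) / 2)
                    ((∑ i ∈ Finset.range j, α i) + α j / 2)) ∧
    (∀ j, 1 ≤ j → j ≤ m - 1 →
      nodePower ((∑ i ∈ Finset.range j, α i) - α (j - 1) / 2)
                ((∑ i ∈ Finset.range j, α i) + α j / 2)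
        ≠ nodePower ((∑ i ∈ Finset.range (j + 1), α i) - α j / 2)
                    ((∑ i ∈ Finset.range (j + 1), α i) + α (j + 1) / 2)) :=
  nodePower_pos_and_consecutive_ne_general m α hpos hsum
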